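/- arXiv:2507.13521 — 6 statements merged into one kernel-verified Lean document; each statement's English description precedes it below -/
import Mathlib

section
/- Let $V$ be a complex vector space with basis $\{e_i\}_{i \in I}$ and fix $d \ge 3$. Define the homogeneous degree-$d$ polynomial function $f(\sum_i x_i e_i) = \sum_i x_i^d$ (equivalently, a symmetric $d$-linear form). If $v = \sum_i a_i e_i \in V$, then the directional derivative $\partial_v f$, given by $(\partial_v f)(\sum_i x_i e_i) = \sum_i d a_i x_i^{d-1}$, is a scalar multiple of a $(d-1)$-st power of a linear form if and only if $v$ is a scalar multiple of some basis vector $e_j$. -/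
/-- The diagonal degree-`d` form `f(∑ xᵢ eᵢ) = ∑ xᵢ^d` on the free vector space on `I`. -/
noncomputable def diagForm {I : Type*} (d : ℕ) (v : I →₀ ℂ) : ℂ :=
  ∑ i ∈ v.support, (v i) ^ d

/-- The directional derivative `∂_v f` of the diagonal form, as a function of `w`:
`(∂_v f)(w) = ∑ᵢ d · vᵢ · wᵢ^(d-1)`. -/
noncomputable def diagFormDeriv {I : Type*} (d : ℕ) (v w : I →₀ ℂ) : ℂ :=
  ∑ i ∈ v.support, (d : ℂ) * v i * (w i) ^ (d - 1)

open Polynomial in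
private lemma key_poly {a b c A B : ℂ} {n : ℕ} (hn : 2 ≤ n) (ha : a ≠ 0) (hB : B ≠ 0)
    (h : ∀ s : ℂ, a * s ^ n + b = c * (A * s + B) ^ n) : False := by
  have hn0 : n ≠ 0 := by omega
  rcases eq_or_ne A 0 with hA | hA
  · have h0 := h 0
    have h1 := h 1
    rw [zero_pow hn0, mul_zero, zero_add, hA, zero_mul, zero_add] at h0
    rw [one_pow, mul_one, hA, zero_mul, zero_add] at h1
    rw [← h0] at h1
    exact ha (by linear_combination h1)
  · have h' : ∀ u : ℂ, (a / A ^ n) * u ^ n + b = c * (u + B) ^ n := by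
      intro u
      have := h (u / A)
      field_simp at this ⊢
      have hAn : A⁻¹ ^ n * A ^ n = 1 := by rw [← mul_pow, inv_mul_cancel₀ hA, one_pow]
      linear_combination A ^ n * this - a * u ^ n * hAn
    have hPQ : (C (a / A ^ n) * X ^ n + C b : ℂ[X]) = C c * (X + C B) ^ n := by
      apply Polynomial.funext
      intro r
      simp [h' r]
    have h1 := congrArg (fun p => Polynomial.coeff p n) hPQ
    have h2 := congrArg (fun p => Polynomial.coeff p (n - 1)) hPQ
    have e1 : n - n = 0 := by omega
    have e2 : n - (n - 1) = 1 := by omega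
    have e3 : n - 1 ≠ n := by omega
    have e4 : n - 1 ≠ 0 := by omega
    have e5 : n.choose (n - 1) = n := by
      rw [← Nat.choose_symm (by omega), e2, Nat.choose_one_right]
    simp only [coeff_add, coeff_C_mul, coeff_X_pow, coeff_C, coeff_X_add_C_pow,
      if_pos rfl, if_neg hn0, if_neg e3, if_neg e4, e1, e2, e5, pow_zero, pow_one,
      Nat.cast_id] at h1 h2
    simp only [if_true, mul_one, mul_zero, add_zero, zero_add, one_mul,
      Nat.choose_self, Nat.cast_one] at h1 h2
    have hc : c ≠ 0 := by
      rw [← h1]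
      exact div_ne_zero ha (pow_ne_zero _ hA)
    exact (mul_ne_zero hc (mul_ne_zero hB (Nat.cast_ne_zero.mpr hn0))) h2.symm

private lemma eval_pair {I : Type*} (d : ℕ) (hd1 : d - 1 ≠ 0) (v : I →₀ ℂ) {i j : I}
    (hij : i ≠ j) (hi : i ∈ v.support) (hj : j ∈ v.support) (s t : ℂ) :
    diagFormDeriv d v (Finsupp.single i s + Finsupp.single j t) =
      (d : ℂ) * v i * s ^ (d - 1) + (d : ℂ) * v j * t ^ (d - 1) := by
  classical
  unfold diagFormDeriv
  have hsub : ({i, j} : Finset I) ⊆ v.support := by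
    intro k hk
    simp only [Finset.mem_insert, Finset.mem_singleton] at hk
    rcases hk with rfl | rfl <;> assumption
  rw [← Finset.sum_subset hsub]
  · rw [Finset.sum_pair hij]
    simp [Finsupp.single_apply, hij, hij.symm, zero_pow hd1]
  · intro k _ hk
    simp only [Finset.mem_insert, Finset.mem_singleton, not_or] at hk
    simp [Finsupp.single_apply, Ne.symm hk.1, Ne.symm hk.2, zero_pow hd1]

/-- for `d ≥ 3`, `∂_v f` is a scalar multiple of the `(d-1)`-st power of a
linear form if and only if `v` is a scalar multiple of a basis vector. -/
theorem stmt0 {I : Type*} [Nonempty I] (d : ℕ) (hd : 3 ≤ d) (v : I →₀ ℂ) :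
    (∃ (c : ℂ) (ℓ : (I →₀ ℂ) →ₗ[ℂ] ℂ), ∀ w : I →₀ ℂ,
        diagFormDeriv d v w = c * (ℓ w) ^ (d - 1)) ↔
    (∃ (j : I) (c : ℂ), v = c • Finsupp.single j 1) := by
  classical
  have hd1 : d - 1 ≠ 0 := by omega
  have hdC : (d : ℂ) ≠ 0 := Nat.cast_ne_zero.mpr (by omega)
  constructor
  · rintro ⟨c, ℓ, h⟩
    rcases eq_or_ne v 0 with rfl | hv
    · exact ⟨Classical.arbitrary I, 0, by simp⟩
    · obtain ⟨j, hj⟩ := Finsupp.support_nonempty_iff.mpr hv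
      refine ⟨j, v j, ?_⟩
      have hvj : v j ≠ 0 := Finsupp.mem_support_iff.mp hj
      have hsub : ∀ i ∈ v.support, i = j := by
        intro i hi
        by_contra hij
        have hvi : v i ≠ 0 := Finsupp.mem_support_iff.mp hi
        set A := ℓ (Finsupp.single i 1) with hA
        set B := ℓ (Finsupp.single j 1) with hB
        have hℓ : ∀ s t : ℂ, ℓ (Finsupp.single i s + Finsupp.single j t) = A * s + B * t := by
          intro s t
          rw [map_add]
          have h1 : (Finsupp.single i s : I →₀ ℂ) = s • Finsupp.single i 1 := by
            rw [Finsupp.smul_single, smul_eq_mul, mul_one]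
          have h2 : (Finsupp.single j t : I →₀ ℂ) = t • Finsupp.single j 1 := by
            rw [Finsupp.smul_single, smul_eq_mul, mul_one]
          rw [h1, h2, map_smul, map_smul, smul_eq_mul, smul_eq_mul]
          ring
        -- B ≠ 0 : evaluate at single j 1
        have hBne : B ≠ 0 := by
          have e := h (Finsupp.single i 0 + Finsupp.single j 1)
          rw [eval_pair d hd1 v hij hi hj 0 1, hℓ 0 1, zero_pow hd1, mul_zero, zero_add,
            mul_zero, zero_add, mul_one, one_pow, mul_one] at e
          intro hB0
          rw [hB0, zero_pow hd1, mul_zero] at e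
          exact hvj (by simpa [hdC] using e)
        have hkey : ∀ s : ℂ, (d : ℂ) * v i * s ^ (d - 1) + (d : ℂ) * v j = c * (A * s + B) ^ (d - 1) := by
          intro s
          have e := h (Finsupp.single i s + Finsupp.single j 1)
          rw [eval_pair d hd1 v hij hi hj s 1, hℓ s 1, one_pow, mul_one, mul_one] at e
          exact e
        exact key_poly (n := d - 1) (by omega) (mul_ne_zero hdC hvi) hBne hkey
      ext k
      rcases eq_or_ne k j with rfl | hkj
      · simp [Finsupp.single_apply]
      · have hk : v k = 0 := by
          by_contra hk
          exact hkj (hsub k (Finsupp.mem_support_iff.mpr hk))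
        simp [Finsupp.single_apply, Ne.symm hkj, hk]
  · rintro ⟨j, c, rfl⟩
    rcases eq_or_ne c 0 with rfl | hc
    · exact ⟨0, 0, by simp [diagFormDeriv]⟩
    · refine ⟨(d : ℂ) * c, Finsupp.lapply j, fun w => ?_⟩
      have hs : (c • Finsupp.single j 1 : I →₀ ℂ) = Finsupp.single j c := by
        rw [Finsupp.smul_single, smul_eq_mul, mul_one]
      rw [hs]
      unfold diagFormDeriv
      rw [Finsupp.support_single_ne_zero _ hc, Finset.sum_singleton]
      simp [mul_assoc]
end

section
/- Let $V$ be a complex vector space with basis $\{e_i\}_{i \in I}$ and fix $d \ge 3$. Let $f$ be the diagonal symmetric $d$-form with $f(\sum_i x_i e_i) = \sum_i x_i^d$. Then the group of linear automorphisms $g \in \mathbf{GL}(V)$ satisfying $f(g v) = f(v)$ for all $v$ is exactly the wreath product $\mu_d \wr \mathfrak{S}_I$: every such $g$ permutes the basis vectors up to multiplication by $d$-th roots of unity, and conversely every such transformation preserves $f$. -/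
namespace Polynomial

theorem coeff_C_add_C_mul_X_pow {R : Type*} [CommRing R] (a b : R) (n k : ℕ) :
    ((C a + C b * X) ^ n).coeff k = n.choose k * a ^ (n - k) * b ^ k := by
  have : (C a + C b * X) ^ n = ((X + C a) ^ n).comp (C b * X) := by
    rw [pow_comp, add_comp, X_comp, C_comp, add_comm]
  rw [this, comp_C_mul_X_coeff, coeff_X_add_C_pow]
  ring

end Polynomial

open Polynomial in
theorem Finset.sum_pow_mul_pow_eq_of_forall_sum_add_mul_pow_eq {ι R : Type*} [CommRing R]
    [IsDomain R] [CharZero R] {n k : ℕ} (hk : k ≤ n) {s t : Finset ι} {a b a' b' : ι → R}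
    (h : ∀ x, ∑ j ∈ s, (a j + x * b j) ^ n = ∑ j ∈ t, (a' j + x * b' j) ^ n) :
    ∑ j ∈ s, a j ^ (n - k) * b j ^ k = ∑ j ∈ t, a' j ^ (n - k) * b' j ^ k := by
  have hpoly :
      ∑ j ∈ s, (C (a j) + C (b j) * X) ^ n = ∑ j ∈ t, (C (a' j) + C (b' j) * X) ^ n := by
    refine Polynomial.funext fun x => ?_
    simpa [eval_finsetSum, mul_comm x] using h x
  have hcoeff := congrArg (coeff · k) hpoly
  simp only [finsetSum_coeff, coeff_C_add_C_mul_X_pow, mul_assoc, ← Finset.mul_sum] at hcoeff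
  exact mul_left_cancel₀ (Nat.cast_ne_zero.mpr (Nat.choose_pos hk).ne') hcoeff

section

open Finsupp

variable {I : Type*} {d : ℕ}

theorem diagForm_eq_sum_of_support_subset (hd : d ≠ 0) {v : I →₀ ℂ} {s : Finset I}
    (hs : v.support ⊆ s) : diagForm d v = ∑ j ∈ s, v j ^ d :=
  Finsupp.sum_of_support_subset v hs (fun _ a => a ^ d) fun _ _ => zero_pow hd

theorem diagForm_single (hd : d ≠ 0) (j : I) (a : ℂ) : diagForm d (single j a) = a ^ d := by
  rw [diagForm_eq_sum_of_support_subset hd support_single_subset, Finset.sum_singleton,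
    single_eq_same]

theorem diagForm_eq_of_apply_perm (hd : d ≠ 0) (σ : Equiv.Perm I) {ζ : I → ℂ}
    (hζ : ∀ i, ζ i ^ d = 1) {v w : I →₀ ℂ} (hw : ∀ i, w (σ i) = ζ i * v i) :
    diagForm d w = diagForm d v := by
  have hsupp : w.support ⊆ v.support.map σ.toEmbedding := by
    intro j hj
    obtain ⟨i, rfl⟩ := σ.surjective j
    rw [mem_support_iff, hw] at hj
    exact Finset.mem_map_of_mem _ (mem_support_iff.mpr (right_ne_zero_of_mul hj))
  rw [diagForm_eq_sum_of_support_subset hd hsupp, Finset.sum_map, diagForm]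
  exact Finset.sum_congr rfl fun i _ => by simp [hw, mul_pow, hζ]

/-- The polar form `(v, w) ↦ ∑ⱼ vⱼ^(d-2) wⱼ²`: up to the factor `d.choose 2`, the coefficient of
`x²` in `diagForm d (v + x • w)`. -/
noncomputable def diagPolar (d : ℕ) (v w : I →₀ ℂ) : ℂ :=
  ∑ j ∈ v.support, v j ^ (d - 2) * w j ^ 2

theorem diagPolar_eq_sum_of_subset [DecidableEq I] (hd : 3 ≤ d) {v w : I →₀ ℂ} {s : Finset I}
    (hs : v.support ∩ w.support ⊆ s) :
    diagPolar d v w = ∑ j ∈ s, v j ^ (d - 2) * w j ^ 2 := by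
  have hreduce : ∀ t, v.support ∩ w.support ⊆ t →
      ∑ j ∈ t, v j ^ (d - 2) * w j ^ 2 = ∑ j ∈ v.support ∩ w.support, v j ^ (d - 2) * w j ^ 2 :=
    fun t ht => (Finset.sum_subset ht fun j _ hj => by
      rcases not_and_or.mp (Finset.mem_inter.not.mp hj) with hv | hw
      · rw [notMem_support_iff.mp hv, zero_pow (by omega), zero_mul]
      · rw [notMem_support_iff.mp hw, zero_pow two_ne_zero, mul_zero]).symm
  rw [diagPolar, hreduce _ Finset.inter_subset_left, hreduce s hs]

theorem diagPolar_map (hd : 3 ≤ d) (g : (I →₀ ℂ) →ₗ[ℂ] (I →₀ ℂ))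
    (hg : ∀ v, diagForm d (g v) = diagForm d v) (v w : I →₀ ℂ) :
    diagPolar d (g v) (g w) = diagPolar d v w := by
  classical
  have hline : ∀ (v w : I →₀ ℂ) (x : ℂ),
      diagForm d (v + x • w) = ∑ j ∈ v.support ∪ w.support, (v j + x * w j) ^ d := fun v w x =>
    diagForm_eq_sum_of_support_subset (by omega)
      (support_add.trans (Finset.union_subset_union le_rfl support_smul))
  rw [diagPolar_eq_sum_of_subset hd (Finset.inter_subset_union),
    diagPolar_eq_sum_of_subset hd (Finset.inter_subset_union)]
  refine Finset.sum_pow_mul_pow_eq_of_forall_sum_add_mul_pow_eq (by omega) fun x => ?_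
  rw [← hline, ← hline, ← map_smul, ← map_add, hg]

theorem diagPolar_single_one_left (hd : 3 ≤ d) (i : I) (w : I →₀ ℂ) :
    diagPolar d (single i 1) w = w i ^ 2 := by
  classical
  rw [diagPolar_eq_sum_of_subset hd (Finset.inter_subset_left.trans support_single_subset),
    Finset.sum_singleton, single_eq_same, one_pow, one_mul]

theorem diagPolar_single_one_right (hd : 3 ≤ d) (u : I →₀ ℂ) (k : I) :
    diagPolar d u (single k 1) = u k ^ (d - 2) := by
  classical
  rw [diagPolar_eq_sum_of_subset hd (Finset.inter_subset_right.trans support_single_subset),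
    Finset.sum_singleton, single_eq_same, one_pow, mul_one]

theorem diagPolar_single_one_add_single_one_right (hd : 3 ≤ d) (u : I →₀ ℂ) {k l : I}
    (hkl : k ≠ l) :
    diagPolar d u (single k 1 + single l 1) = u k ^ (d - 2) + u l ^ (d - 2) := by
  classical
  rw [diagPolar_eq_sum_of_subset hd (Finset.inter_subset_right.trans
    support_single_add_single_subset), Finset.sum_pair hkl]
  simp [hkl, hkl.symm]

theorem exists_map_single_one_eq_single (hd : 3 ≤ d) (g : (I →₀ ℂ) ≃ₗ[ℂ] (I →₀ ℂ))
    (hg : ∀ v, diagForm d (g v) = diagForm d v) (i : I) :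
    ∃ (j : I) (c : ℂ), g (single i 1) = c • single j 1 := by
  set u := g (single i 1)
  set a : I → ℂ := fun k => g.symm (single k 1) i
  have hpolar : ∀ p, diagPolar d u p = g.symm p i ^ 2 := fun p => calc
    diagPolar d u p = diagPolar d (g (single i 1)) (g (g.symm p)) := by rw [g.apply_symm_apply]
    _ = g.symm p i ^ 2 :=
      (diagPolar_map hd g.toLinearMap hg _ _).trans (diagPolar_single_one_left hd i _)
  have hsq : ∀ k, u k ^ (d - 2) = a k ^ 2 := fun k => by
    rw [← diagPolar_single_one_right hd, hpolar]
  have hmul : ∀ k l, k ≠ l → a k * a l = 0 := fun k l hkl => by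
    have := hpolar (single k 1 + single l 1)
    rw [diagPolar_single_one_add_single_one_right hd u hkl, hsq, hsq, map_add,
      Finsupp.add_apply] at this
    linear_combination -this / 2
  have ha : ∀ k ∈ u.support, a k ≠ 0 := fun k hk => by
    rw [← pow_ne_zero_iff two_ne_zero, ← hsq]
    exact pow_ne_zero _ (mem_support_iff.mp hk)
  have hcard : u.support.card ≤ 1 := Finset.card_le_one.mpr fun k hk l hl => by
    by_contra hkl
    exact mul_ne_zero (ha k hk) (ha l hl) (hmul k l hkl)
  have : Nonempty I := ⟨i⟩
  obtain ⟨j, c, hjc⟩ := card_support_le_one'.mp hcard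
  exact ⟨j, c, by rw [smul_single_one]; exact hjc⟩

theorem leftInverse_of_map_single_one {R : Type*} [Semiring R] [Nontrivial R]
    (g : (I →₀ R) ≃ₗ[R] (I →₀ R)) {F G : I → I} {c c' : I → R}
    (hF : ∀ i, g (single i 1) = c i • single (F i) 1)
    (hG : ∀ j, g.symm (single j 1) = c' j • single (G j) 1) :
    Function.LeftInverse G F := fun i => by
  have h := g.symm_apply_apply (single i 1)
  rw [hF, map_smul, hG, smul_smul, smul_single_one, single_eq_single_iff] at h
  exact h.resolve_right (fun h0 => one_ne_zero h0.2) |>.1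

theorem map_apply_perm_of_map_single_one {R : Type*} [CommSemiring R]
    (g : (I →₀ R) →ₗ[R] (I →₀ R)) (σ : Equiv.Perm I) {ζ : I → R}
    (hg : ∀ i, g (single i 1) = ζ i • single (σ i) 1) (v : I →₀ R) (i : I) :
    g v (σ i) = ζ i * v i := by
  classical
  induction v using Finsupp.induction_linear with
  | zero => simp
  | add v w hv hw => simp [hv, hw, mul_add]
  | single k b =>
    rw [← smul_single_one, map_smul, hg]
    by_cases hki : k = i
    · subst hki; simp [mul_comm]
    · simp [Ne.symm hki]

end

/-- for `d ≥ 3`, the group of linear automorphisms preserving the diagonal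
form `f` is exactly the wreath product `μ_d ≀ 𝔖_I`: `g` preserves `f` iff `g` sends each
basis vector `e_i` to `ζ_i e_{σ(i)}` for a permutation `σ` and `d`-th roots of unity `ζ_i`. -/
theorem stmt1 {I : Type*} (d : ℕ) (hd : 3 ≤ d) (g : (I →₀ ℂ) ≃ₗ[ℂ] (I →₀ ℂ)) :
    (∀ v : I →₀ ℂ, diagForm d (g v) = diagForm d v) ↔
    (∃ (σ : Equiv.Perm I) (ζ : I → ℂ), (∀ i, ζ i ^ d = 1) ∧
      ∀ i, g (Finsupp.single i 1) = ζ i • Finsupp.single (σ i) 1) := by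
  have hd0 : d ≠ 0 := by omega
  constructor
  · intro hg
    have hg' : ∀ v, diagForm d (g.symm v) = diagForm d v := fun v => by
      rw [← hg, g.apply_symm_apply]
    choose F c hF using exists_map_single_one_eq_single hd g hg
    choose G c' hG using exists_map_single_one_eq_single hd g.symm hg'
    refine ⟨⟨F, G, leftInverse_of_map_single_one g hF hG,
      leftInverse_of_map_single_one g.symm hG hF⟩, c, fun i => ?_, hF⟩
    simpa [hF, Finsupp.smul_single_one, diagForm_single hd0] using hg (Finsupp.single i 1)
  · rintro ⟨σ, ζ, hζ, hg⟩ v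
    exact diagForm_eq_of_apply_perm hd0 σ hζ
      (map_apply_perm_of_map_single_one g.toLinearMap σ hg v)
end

section
/- Let $X$ be a relational structure with relations $P_1,\ldots,P_r$ of arities $d_1,\ldots,d_r$, and let $\Gamma = \mathrm{Aut}(X)$. Let $V$ have basis $\{e_x\}_{x \in X}$, let $f_i$ be the multilinear form encoding $P_i$ (value $1$ on tuples of basis vectors satisfying $P_i$, else $0$), and let $g_2, g_3$ be the diagonal symmetric forms ($g_k(e_{x_1},\ldots,e_{x_k}) = 1$ iff all $x_j$ equal, else $0$). Then the subgroup of $\mathbf{GL}(V)$ preserving all of $f_1,\ldots,f_r,g_2,g_3$ is isomorphic to $\Gamma$, acting by permuting basis vectors. -/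
open Finsupp

namespace Stmt5Aux

set_option linter.unusedSectionVars false

variable {X : Type*} [DecidableEq X]

lemma expandL (L : (X →₀ ℂ) →ₗ[ℂ] ℂ) (u : X →₀ ℂ) :
    L u = u.sum fun x c => c * L (Finsupp.single x 1) := by
  conv_lhs => rw [← u.sum_single]
  rw [map_finsuppSum]
  apply Finsupp.sum_congr
  intro x _
  rw [← smul_eq_mul, ← map_smul]
  congr 1
  rw [Finsupp.smul_single, smul_eq_mul, mul_one]

lemma upd2_0 {M : Type*} (a b c : M) : Function.update ![a, b] 0 c = ![c, b] := by
  funext j; fin_cases j <;> simp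

lemma upd2_1 {M : Type*} (a b c : M) : Function.update ![a, b] 1 c = ![a, c] := by
  funext j; fin_cases j <;> simp

lemma upd3_0 {M : Type*} (a b c d : M) : Function.update ![a, b, c] 0 d = ![d, b, c] := by
  funext j; fin_cases j <;> simp

lemma upd3_1 {M : Type*} (a b c d : M) : Function.update ![a, b, c] 1 d = ![a, d, c] := by
  funext j; fin_cases j <;> simp

lemma upd3_2 {M : Type*} (a b c d : M) : Function.update ![a, b, c] 2 d = ![a, b, d] := by
  funext j; fin_cases j <;> simp

section Forms
variable (g2 : MultilinearMap ℂ (fun _ : Fin 2 => (X →₀ ℂ)) ℂ)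
variable (g3 : MultilinearMap ℂ (fun _ : Fin 3 => (X →₀ ℂ)) ℂ)

lemma pair2 (hg2 : ∀ x : Fin 2 → X,
      g2 (fun j => Finsupp.single (x j) 1) = if ∀ j, x j = x 0 then 1 else 0)
    (x y : X) :
    g2 ![Finsupp.single x 1, Finsupp.single y 1] = if y = x then 1 else 0 := by
  have h := hg2 ![x, y]
  have he : (fun j => Finsupp.single ((![x, y] : Fin 2 → X) j) (1:ℂ))
      = ![Finsupp.single x 1, Finsupp.single y 1] := by
    funext j; fin_cases j <;> simp
  rw [he] at h
  rw [h]
  congr 1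
  simp [Fin.forall_fin_two]

lemma pair3 (hg3 : ∀ x : Fin 3 → X,
      g3 (fun j => Finsupp.single (x j) 1) = if ∀ j, x j = x 0 then 1 else 0)
    (x y z : X) :
    g3 ![Finsupp.single x 1, Finsupp.single y 1, Finsupp.single z 1]
      = if y = x ∧ z = x then 1 else 0 := by
  have h := hg3 ![x, y, z]
  have he : (fun j => Finsupp.single ((![x, y, z] : Fin 3 → X) j) (1:ℂ))
      = ![Finsupp.single x 1, Finsupp.single y 1, Finsupp.single z 1] := by
    funext j; fin_cases j <;> simp
  rw [he] at h
  rw [h]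
  congr 1
  simp only [eq_iff_iff]
  constructor
  · intro hfa; exact ⟨hfa 1, hfa 2⟩
  · rintro ⟨h1, h2⟩ j; fin_cases j <;> simp [h1, h2]

variable (hg2 : ∀ x : Fin 2 → X,
      g2 (fun j => Finsupp.single (x j) 1) = if ∀ j, x j = x 0 then 1 else 0)
variable (hg3 : ∀ x : Fin 3 → X,
      g3 (fun j => Finsupp.single (x j) 1) = if ∀ j, x j = x 0 then 1 else 0)

include hg2 in
lemma k2single (u : X →₀ ℂ) (y : X) : g2 ![u, Finsupp.single y 1] = u y := by
  have hsl : g2 ![u, Finsupp.single y 1]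
      = g2.toLinearMap ![0, Finsupp.single y 1] 0 u := by
    rw [MultilinearMap.toLinearMap_apply, upd2_0]
  rw [hsl, expandL]
  have step : (u.sum fun x c => c * g2.toLinearMap ![0, Finsupp.single y 1] 0 (Finsupp.single x 1))
      = u.sum fun x c => if x = y then c else 0 := by
    apply Finsupp.sum_congr
    intro x _
    rw [MultilinearMap.toLinearMap_apply, upd2_0, pair2 g2 hg2]
    by_cases h : x = y
    · subst h; simp
    · rw [if_neg (fun hh => h hh.symm), if_neg h, mul_zero]
  rw [step, Finsupp.sum_ite_self_eq' u y]

include hg2 in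
lemma k2sum (u w : X →₀ ℂ) : g2 ![u, w] = w.sum fun y c => c * u y := by
  have hsl : ∀ v, g2 ![u, v] = g2.toLinearMap ![u, 0] 1 v := by
    intro v; rw [MultilinearMap.toLinearMap_apply, upd2_1]
  rw [hsl, expandL]
  apply Finsupp.sum_congr
  intro y _
  rw [← hsl, k2single g2 hg2]

include hg3 in
lemma k3single (u v : X →₀ ℂ) (y : X) :
    g3 ![u, v, Finsupp.single y 1] = u y * v y := by
  have inner : ∀ x, g3 ![Finsupp.single x 1, v, Finsupp.single y 1]
      = if x = y then v y else 0 := by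
    intro x
    have hsl2 : ∀ v', g3 ![Finsupp.single x 1, v', Finsupp.single y 1]
        = g3.toLinearMap ![Finsupp.single x 1, 0, Finsupp.single y 1] 1 v' := by
      intro v'; rw [MultilinearMap.toLinearMap_apply, upd3_1]
    rw [hsl2, expandL]
    have step : ∀ x' c, (c * g3.toLinearMap ![Finsupp.single x 1, 0, Finsupp.single y 1] 1
          (Finsupp.single x' (1:ℂ)))
        = if x' = x ∧ y = x then c else 0 := by
      intro x' c
      rw [MultilinearMap.toLinearMap_apply, upd3_1, pair3 g3 hg3]
      by_cases h : x' = x ∧ y = x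
      · simp [h]
      · simp [h]
    by_cases hxy : x = y
    · subst hxy
      rw [if_pos rfl]
      rw [Finsupp.sum_congr (g2 := fun x' c => if x' = x then c else 0)
        (fun x' _ => by rw [step]; simp)]
      exact Finsupp.sum_ite_self_eq' v x
    · rw [if_neg hxy]
      rw [Finsupp.sum_congr (g2 := fun _ _ => 0)
        (fun x' _ => by rw [step]; exact if_neg (by rintro ⟨-, h2⟩; exact hxy h2.symm))]
      exact Finset.sum_const_zero
  have hsl1 : ∀ u', g3 ![u', v, Finsupp.single y 1]
      = g3.toLinearMap ![0, v, Finsupp.single y 1] 0 u' := by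
    intro u'; rw [MultilinearMap.toLinearMap_apply, upd3_0]
  rw [hsl1, expandL]
  have step2 : (u.sum fun x c => c * g3.toLinearMap ![0, v, Finsupp.single y 1] 0
        (Finsupp.single x 1))
      = u.sum fun x c => if x = y then c * v y else 0 := by
    apply Finsupp.sum_congr
    intro x _
    rw [← hsl1, inner]
    by_cases h : x = y <;> simp [h]
  rw [step2]
  rw [Finsupp.sum_ite_eq' u y (fun x c => c * v y)]
  by_cases h : y ∈ u.support
  · rw [if_pos h]
  · rw [if_neg h, Finsupp.notMem_support_iff.mp h, zero_mul]

include hg2 hg3 in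
lemma perm_single (g : (X →₀ ℂ) ≃ₗ[ℂ] (X →₀ ℂ))
    (h2 : ∀ v : Fin 2 → (X →₀ ℂ), g2 (fun j => g (v j)) = g2 v)
    (h3 : ∀ v : Fin 3 → (X →₀ ℂ), g3 (fun j => g (v j)) = g3 v)
    (x : X) : ∃ y, g (Finsupp.single x 1) = Finsupp.single y 1 := by
  set u := g (Finsupp.single x 1) with hu
  set L : (X →₀ ℂ) →ₗ[ℂ] ℂ :=
    g3.toLinearMap ![u, u, 0] 2 - g2.toLinearMap ![u, 0] 1 with hL
  have hLdef : ∀ w, L w = g3 ![u, u, w] - g2 ![u, w] := by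
    intro w
    simp only [hL, LinearMap.sub_apply, MultilinearMap.toLinearMap_apply, upd3_2, upd2_1]
  have hLz : ∀ z, L (g (Finsupp.single z 1)) = 0 := by
    intro z
    rw [hLdef]
    have e3 : (![u, u, g (Finsupp.single z 1)] : Fin 3 → (X →₀ ℂ))
        = fun j => g ((![Finsupp.single x 1, Finsupp.single x 1, Finsupp.single z 1]
          : Fin 3 → (X →₀ ℂ)) j) := by
      funext j; fin_cases j <;> simp [hu]
    have e2 : (![u, g (Finsupp.single z 1)] : Fin 2 → (X →₀ ℂ))
        = fun j => g ((![Finsupp.single x 1, Finsupp.single z 1] : Fin 2 → (X →₀ ℂ)) j) := by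
      funext j; fin_cases j <;> simp [hu]
    rw [e3, e2, h3, h2, pair3 g3 hg3, pair2 g2 hg2]
    by_cases h : z = x <;> simp [h]
  have hL0 : ∀ w, L w = 0 := by
    have hcomp : L ∘ₗ (g : (X →₀ ℂ) →ₗ[ℂ] (X →₀ ℂ)) = 0 := by
      apply Finsupp.lhom_ext
      intro z c
      have hz : (Finsupp.single z c : X →₀ ℂ) = c • Finsupp.single z 1 := by
        rw [Finsupp.smul_single, smul_eq_mul, mul_one]
      rw [LinearMap.comp_apply, hz]
      simp only [LinearEquiv.coe_coe, map_smul]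
      rw [hLz z]
      simp
    intro w
    have := LinearMap.ext_iff.mp hcomp (g.symm w)
    simpa using this
  have u01 : ∀ y, u y * u y = u y := by
    intro y
    have h0 := hL0 (Finsupp.single y 1)
    rw [hLdef, k3single g3 hg3, k2single g2 hg2] at h0
    exact sub_eq_zero.mp h0
  have hnorm : g2 ![u, u] = 1 := by
    have e2 : (![u, u] : Fin 2 → (X →₀ ℂ))
        = fun j => g ((![Finsupp.single x 1, Finsupp.single x 1] : Fin 2 → (X →₀ ℂ)) j) := by
      funext j; fin_cases j <;> simp [hu]
    rw [e2, h2, pair2 g2 hg2]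
    simp
  have hcard : u.support.card = 1 := by
    have hsum : g2 ![u, u] = u.sum fun y c => c * u y := k2sum g2 hg2 u u
    have : u.sum (fun y c => c * u y) = (u.support.card : ℂ) := by
      rw [Finsupp.sum]
      rw [Finset.sum_congr rfl (fun y hy => ?_), Finset.sum_const, nsmul_eq_mul, mul_one]
      have hy0 : u y ≠ 0 := Finsupp.mem_support_iff.mp hy
      have := u01 y
      have h1 : u y = 1 :=
        mul_right_cancel₀ hy0 (by rw [this, one_mul])
      rw [h1, mul_one]
    have : (u.support.card : ℂ) = 1 := by rw [← this, ← hsum, hnorm]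
    exact_mod_cast this
  obtain ⟨a, b, hb, hub⟩ := Finsupp.card_support_eq_one'.mp hcard
  have hbb : b * b = b := by
    have := u01 a
    rw [hub] at this
    simpa using this
  have hb1 : b = 1 := by
    have := mul_right_cancel₀ hb (by rw [hbb, one_mul] : b * b = 1 * b)
    exact this
  exact ⟨a, by rw [hub, hb1]⟩

end Forms
end Stmt5Aux

/-- for a relational structure `X` with relations `P i` of arity `d i`,
the subgroup of `GL(V)` preserving the forms `f₁, …, f_r` (encoding the relations) together
with the diagonal symmetric forms `g₂` and `g₃` consists exactly of the permutation matrices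
coming from automorphisms of the structure `X`; i.e. it is isomorphic to `Γ = Aut(X)`. -/
theorem stmt5 {X : Type*} [DecidableEq X] (r : ℕ) (d : Fin r → ℕ)
    (P : ∀ i : Fin r, (Fin (d i) → X) → Prop) [∀ i x, Decidable (P i x)]
    (f : ∀ i : Fin r, MultilinearMap ℂ (fun _ : Fin (d i) => (X →₀ ℂ)) ℂ)
    (hf : ∀ (i : Fin r) (x : Fin (d i) → X),
      f i (fun j => Finsupp.single (x j) 1) = if P i x then 1 else 0)
    (g2 : MultilinearMap ℂ (fun _ : Fin 2 => (X →₀ ℂ)) ℂ)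
    (hg2 : ∀ x : Fin 2 → X,
      g2 (fun j => Finsupp.single (x j) 1) = if ∀ j, x j = x 0 then 1 else 0)
    (g3 : MultilinearMap ℂ (fun _ : Fin 3 => (X →₀ ℂ)) ℂ)
    (hg3 : ∀ x : Fin 3 → X,
      g3 (fun j => Finsupp.single (x j) 1) = if ∀ j, x j = x 0 then 1 else 0)
    (g : (X →₀ ℂ) ≃ₗ[ℂ] (X →₀ ℂ)) :
    ((∀ (i : Fin r) (v : Fin (d i) → (X →₀ ℂ)), f i (fun j => g (v j)) = f i v) ∧
     (∀ v : Fin 2 → (X →₀ ℂ), g2 (fun j => g (v j)) = g2 v) ∧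
     (∀ v : Fin 3 → (X →₀ ℂ), g3 (fun j => g (v j)) = g3 v)) ↔
    (∃ σ : Equiv.Perm X, (∀ (i : Fin r) (x : Fin (d i) → X), P i x ↔ P i (σ ∘ x)) ∧
      ∀ x, g (Finsupp.single x 1) = Finsupp.single (σ x) 1) := by
  have key : ∀ (p q : Prop) [Decidable p] [Decidable q],
      ((if p then (1:ℂ) else 0) = if q then 1 else 0) → (p ↔ q) := by
    intro p q _ _ h
    by_cases hp : p <;> by_cases hq : q <;> simp_all
  constructor
  · rintro ⟨h1, h2, h3⟩
    have h2s : ∀ v : Fin 2 → (X →₀ ℂ), g2 (fun j => g.symm (v j)) = g2 v := by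
      intro v
      have := (h2 (fun j => g.symm (v j))).symm
      simpa using this
    have h3s : ∀ v : Fin 3 → (X →₀ ℂ), g3 (fun j => g.symm (v j)) = g3 v := by
      intro v
      have := (h3 (fun j => g.symm (v j))).symm
      simpa using this
    choose s hs using Stmt5Aux.perm_single g2 g3 hg2 hg3 g h2 h3
    choose t ht using Stmt5Aux.perm_single g2 g3 hg2 hg3 g.symm h2s h3s
    have sinj : Function.Injective (fun a : X => Finsupp.single a (1:ℂ)) :=
      Finsupp.single_left_injective one_ne_zero
    have hts : ∀ x, t (s x) = x := by
      intro x
      apply sinj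
      simp only
      rw [← ht (s x), ← hs x, g.symm_apply_apply]
    have hst : ∀ y, s (t y) = y := by
      intro y
      apply sinj
      simp only
      rw [← hs (t y), ← ht y, g.apply_symm_apply]
    refine ⟨⟨s, t, hts, hst⟩, ?_, hs⟩
    intro i x
    have hpres := h1 i (fun j => Finsupp.single (x j) 1)
    rw [show (fun j => g (Finsupp.single (x j) 1)) = fun j => Finsupp.single (s (x j)) 1 from
      funext fun j => hs (x j)] at hpres
    rw [hf i (fun j => s (x j)), hf i x] at hpres
    exact (key _ _ hpres).symm
  · rintro ⟨σ, hP, hσ⟩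
    have hgσ : ∀ (n : ℕ) (x : Fin n → X),
        (fun j => g (Finsupp.single (x j) 1)) = fun j => Finsupp.single (σ (x j)) 1 := by
      intro n x; funext j; exact hσ (x j)
    refine ⟨?_, ?_, ?_⟩
    · intro i v
      have hext : (f i).compLinearMap (fun _ => (g : (X →₀ ℂ) →ₗ[ℂ] (X →₀ ℂ))) = f i := by
        apply Module.Basis.ext_multilinear (fun _ => Finsupp.basisSingleOne)
        intro vv
        simp only [MultilinearMap.compLinearMap_apply, Finsupp.basisSingleOne,
          Module.Basis.coe_ofRepr, LinearEquiv.refl_symm, LinearEquiv.refl_apply, LinearEquiv.coe_coe]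
        rw [show (fun j => g (Finsupp.single (vv j) 1)) =
          fun j => Finsupp.single (σ (vv j)) 1 from hgσ _ vv]
        rw [hf i (fun j => σ (vv j)), hf i vv]
        exact if_congr (hP i vv).symm rfl rfl
      calc f i (fun j => g (v j))
          = (f i).compLinearMap (fun _ => (g : (X →₀ ℂ) →ₗ[ℂ] (X →₀ ℂ))) v := by
            simp [MultilinearMap.compLinearMap_apply]
        _ = f i v := by rw [hext]
    · intro v
      have hext : g2.compLinearMap (fun _ => (g : (X →₀ ℂ) →ₗ[ℂ] (X →₀ ℂ))) = g2 := by
        apply Module.Basis.ext_multilinear (fun _ => Finsupp.basisSingleOne)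
        intro vv
        simp only [MultilinearMap.compLinearMap_apply, Finsupp.basisSingleOne,
          Module.Basis.coe_ofRepr, LinearEquiv.refl_symm, LinearEquiv.refl_apply, LinearEquiv.coe_coe]
        rw [show (fun j => g (Finsupp.single (vv j) 1)) =
          fun j => Finsupp.single (σ (vv j)) 1 from hgσ _ vv]
        rw [hg2 (fun j => σ (vv j)), hg2 vv]
        exact if_congr (forall_congr' fun j => σ.injective.eq_iff) rfl rfl
      calc g2 (fun j => g (v j))
          = g2.compLinearMap (fun _ => (g : (X →₀ ℂ) →ₗ[ℂ] (X →₀ ℂ))) v := by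
            simp [MultilinearMap.compLinearMap_apply]
        _ = g2 v := by rw [hext]
    · intro v
      have hext : g3.compLinearMap (fun _ => (g : (X →₀ ℂ) →ₗ[ℂ] (X →₀ ℂ))) = g3 := by
        apply Module.Basis.ext_multilinear (fun _ => Finsupp.basisSingleOne)
        intro vv
        simp only [MultilinearMap.compLinearMap_apply, Finsupp.basisSingleOne,
          Module.Basis.coe_ofRepr, LinearEquiv.refl_symm, LinearEquiv.refl_apply, LinearEquiv.coe_coe]
        rw [show (fun j => g (Finsupp.single (vv j) 1)) =
          fun j => Finsupp.single (σ (vv j)) 1 from hgσ _ vv]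
        rw [hg3 (fun j => σ (vv j)), hg3 vv]
        exact if_congr (forall_congr' fun j => σ.injective.eq_iff) rfl rfl
      calc g3 (fun j => g (v j))
          = g3.compLinearMap (fun _ => (g : (X →₀ ℂ) →ₗ[ℂ] (X →₀ ℂ))) v := by
            simp [MultilinearMap.compLinearMap_apply]
        _ = g3 v := by rw [hext]
end

section
/- Fix $m \ge 3$, let $X$ be a relational structure with relations $P_1,\ldots,P_r$ and automorphism group $\Gamma$, and let $V$ be the free complex vector space on $X$. Let $f_i'$ be the $m d_i$-linear form encoding the blown-up relation $P_i'$ (true iff each of the $d_i$ blocks of $m$ arguments is a constant tuple of basis vectors and the block values satisfy $P_i$), and let $g_m$ be the diagonal symmetric $m$-form. Then the subgroup of $\mathbf{GL}(V)$ preserving $f_1',\ldots,f_r',g_m$ is exactly $\mu_m \wr \Gamma$, i.e., maps $e_x \mapsto \zeta_x e_{\sigma(x)}$ with $\zeta_x^m = 1$ and $\sigma \in \Gamma$. -/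
open scoped Classical

/-- The blown-up relation `P'` of a `d`-ary relation `P`: on a `d × m` array of inputs,
it holds iff each block (row) is constant and the block values satisfy `P`. -/
def blownUp {X : Type*} {d m : ℕ} (hm : 0 < m) (P : (Fin d → X) → Prop) :
    (Fin d × Fin m → X) → Prop :=
  fun x => (∀ (a : Fin d) (b c : Fin m), x (a, b) = x (a, c)) ∧
    P (fun a => x (a, ⟨0, hm⟩))

private lemma ite_one_zero_iff {p q : Prop} [Decidable p] [Decidable q]
    (h : (if p then (1:ℂ) else 0) = (if q then 1 else 0)) : p ↔ q := by
  by_cases hp : p <;> by_cases hq : q <;> simp_all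

private lemma finsupp_rep {X : Type*} [DecidableEq X] (w : X →₀ ℂ) :
    w = ∑ y ∈ w.support, w y • Finsupp.single y (1:ℂ) := by
  conv_lhs => rw [← Finsupp.sum_single w]
  rw [Finsupp.sum]
  refine Finset.sum_congr rfl fun y _ => ?_
  rw [Finsupp.smul_single, smul_eq_mul, mul_one]

private lemma ml_expand {X : Type*} [DecidableEq X] {ι : Type*} [Fintype ι] [DecidableEq ι]
    (F : MultilinearMap ℂ (fun _ : ι => (X →₀ ℂ)) ℂ) (v : ι → (X →₀ ℂ)) :
    F v = ∑ r ∈ Fintype.piFinset (fun i => (v i).support),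
      (∏ i, v i (r i)) * F (fun i => Finsupp.single (r i) 1) := by
  calc F v = F (fun i => ∑ y ∈ (v i).support, v i y • Finsupp.single y (1:ℂ)) := by
        congr 1; funext i; exact finsupp_rep (v i)
    _ = ∑ r ∈ Fintype.piFinset (fun i => (v i).support),
          F (fun i => v i (r i) • Finsupp.single (r i) 1) :=
        F.map_sum_finset _ _
    _ = _ := Finset.sum_congr rfl fun r _ => by
        rw [F.map_smul_univ, smul_eq_mul]

/-- for `m ≥ 3`, the subgroup of `GL(V)` preserving the blown-up forms
`f₁', …, f_r'` together with the diagonal symmetric `m`-form `g_m` is exactly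
`μ_m ≀ Γ`, the scaled permutations `e_x ↦ ζ_x e_{σ(x)}` with `ζ_x^m = 1` and
`σ ∈ Γ = Aut(X; P₁, …, P_r)`. -/
theorem stmt7 {X : Type*} [DecidableEq X] (m : ℕ) (hm : 3 ≤ m) (r : ℕ) (d : Fin r → ℕ)
    (P : ∀ i : Fin r, (Fin (d i) → X) → Prop)
    (f' : ∀ i : Fin r, MultilinearMap ℂ (fun _ : Fin (d i) × Fin m => (X →₀ ℂ)) ℂ)
    (hf' : ∀ (i : Fin r) (x : Fin (d i) × Fin m → X),
      f' i (fun j => Finsupp.single (x j) 1) =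
        if blownUp (by omega) (P i) x then 1 else 0)
    (gm : MultilinearMap ℂ (fun _ : Fin m => (X →₀ ℂ)) ℂ)
    (hgm : ∀ x : Fin m → X,
      gm (fun j => Finsupp.single (x j) 1) = if ∀ j j', x j = x j' then 1 else 0)
    (g : (X →₀ ℂ) ≃ₗ[ℂ] (X →₀ ℂ)) :
    ((∀ (i : Fin r) (v : Fin (d i) × Fin m → (X →₀ ℂ)),
        f' i (fun j => g (v j)) = f' i v) ∧
     (∀ v : Fin m → (X →₀ ℂ), gm (fun j => g (v j)) = gm v)) ↔
    (∃ (σ : Equiv.Perm X) (ζ : X → ℂ), (∀ x, ζ x ^ m = 1) ∧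
      (∀ (i : Fin r) (x : Fin (d i) → X), P i x ↔ P i (σ ∘ x)) ∧
      ∀ x, g (Finsupp.single x 1) = ζ x • Finsupp.single (σ x) 1) := by
  obtain ⟨k, rfl⟩ : ∃ k, m = k + 3 := ⟨m - 3, by omega⟩
  have hp : 0 < k + 3 := by omega
  constructor
  · rintro ⟨hf, hg⟩
    set c : X → (X →₀ ℂ) := fun x => g (Finsupp.single x 1) with hc
    have gm_apply : ∀ v : Fin (k+3) → (X →₀ ℂ), gm v =
        ∑ r ∈ Fintype.piFinset (fun i => (v i).support),
          (∏ i, v i (r i)) * (if ∀ j j', r j = r j' then 1 else 0) := by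
      intro v
      rw [ml_expand]
      exact Finset.sum_congr rfl fun r _ => by rw [hgm]
    -- disjointness of supports of the images of basis vectors
    have disj : ∀ x x' : X, x ≠ x' → ∀ z : X, c x z * c x' z = 0 := by
      intro x x' hxx z
      set v : Fin (k+3) → (X →₀ ℂ) :=
        Fin.cons (Finsupp.single x 1) (Fin.cons (Finsupp.single x' 1)
          (fun _ => g.symm (Finsupp.single z 1))) with hv
      have hcomp : (fun j => g (v j)) =
          Fin.cons (c x) (Fin.cons (c x') (fun _ => Finsupp.single z 1)) := by
        funext j
        refine Fin.cases ?_ (fun j' => ?_) j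
        · simp [hv, hc]
        · refine Fin.cases ?_ (fun j'' => ?_) j'
          · simp [hv, hc]
          · simp [hv]
      have hzero : gm v = 0 := by
        rw [gm_apply]
        refine Finset.sum_eq_zero fun r hr => ?_
        have h0 : r 0 = x := by
          have := Fintype.mem_piFinset.mp hr 0
          simpa [hv, Finsupp.support_single_ne_zero _ (one_ne_zero (α := ℂ))] using this
        have h1 : r (Fin.succ 0) = x' := by
          have := Fintype.mem_piFinset.mp hr (Fin.succ 0)
          simpa [hv, Finsupp.support_single_ne_zero _ (one_ne_zero (α := ℂ))] using this
        rw [if_neg, mul_zero]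
        intro hcon
        exact hxx ((h0.symm.trans (hcon 0 (Fin.succ 0))).trans h1)
      have heval := hg v
      rw [hzero, hcomp, gm_apply] at heval
      set W : Fin (k+3) → (X →₀ ℂ) :=
        Fin.cons (c x) (Fin.cons (c x') (fun _ => Finsupp.single z 1)) with hW
      have hprod : (∏ j, W j z) = c x z * c x' z := by
        rw [Fin.prod_univ_succ, Fin.prod_univ_succ]
        simp [hW, mul_assoc]
      have hsum : ∑ r ∈ Fintype.piFinset (fun i => (W i).support),
          (∏ i, W i (r i)) * (if ∀ j j', r j = r j' then 1 else 0)
          = c x z * c x' z := by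
        have h := Finset.sum_eq_single
          (s := Fintype.piFinset (fun i => (W i).support))
          (f := fun r => (∏ i, W i (r i)) * (if ∀ j j', r j = r j' then 1 else 0))
          (fun _ => z) ?_ ?_
        · rw [h]
          beta_reduce
          rw [if_pos (fun _ _ => rfl), mul_one, hprod]
        · intro r hr hne
          beta_reduce
          by_cases hconst : ∀ j j' : Fin (k+3), r j = r j'
          · exfalso
            apply hne; funext j
            have h2 : r (Fin.succ (Fin.succ 0)) = z := by
              have h3 := Fintype.mem_piFinset.mp hr (Fin.succ (Fin.succ 0))
              simp only [hW, Fin.cons_succ] at h3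
              rwa [Finsupp.support_single_ne_zero _ (one_ne_zero (α := ℂ)),
                Finset.mem_singleton] at h3
            rw [hconst j (Fin.succ (Fin.succ 0)), h2]
          · rw [if_neg hconst, mul_zero]
        · intro hnm
          beta_reduce
          rw [Fintype.mem_piFinset] at hnm
          push_neg at hnm
          obtain ⟨j, hj⟩ := hnm
          rw [Finsupp.notMem_support_iff] at hj
          rw [Finset.prod_eq_zero (Finset.mem_univ j) hj, zero_mul]
      rw [hsum] at heval
      exact heval
    have hone : ∀ x, c x ≠ 0 := by
      intro x h
      have h2 : Finsupp.single x (1:ℂ) = 0 := by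
        apply g.injective; rw [map_zero]; exact h
      exact one_ne_zero (Finsupp.single_eq_zero.mp h2)
    have hrep : ∀ w : X →₀ ℂ, g w = ∑ t ∈ w.support, w t • c t := by
      intro w
      conv_lhs => rw [finsupp_rep w]
      rw [map_sum]
      exact Finset.sum_congr rfl fun t _ => by rw [map_smul]
    have husupp : ∀ z : X, (g.symm (Finsupp.single z 1)).support.Nonempty := by
      intro z
      rw [Finsupp.support_nonempty_iff]
      intro h
      have h2 : Finsupp.single z (1:ℂ) = 0 := by
        have := congrArg g h
        rwa [g.apply_symm_apply, map_zero] at this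
      exact one_ne_zero (Finsupp.single_eq_zero.mp h2)
    have key : ∀ z : X, ∀ x ∈ (g.symm (Finsupp.single z 1)).support,
        (c x).support ⊆ {z} := by
      intro z x hx y hy
      rw [Finset.mem_singleton]
      by_contra hyz
      have h0 : Finsupp.single z (1:ℂ) =
          ∑ t ∈ (g.symm (Finsupp.single z 1)).support,
            (g.symm (Finsupp.single z 1)) t • c t := by
        conv_lhs => rw [← g.apply_symm_apply (Finsupp.single z (1:ℂ))]
        exact hrep _
      have h1 := congrArg (fun f : X →₀ ℂ => f y) h0
      simp only [Finsupp.finset_sum_apply, Finsupp.smul_apply, smul_eq_mul] at h1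
      rw [Finsupp.single_eq_of_ne' (Ne.symm hyz)] at h1
      rw [Finset.sum_eq_single x] at h1
      · have hx0 : (g.symm (Finsupp.single z 1)) x ≠ 0 := Finsupp.mem_support_iff.mp hx
        have hy0 : c x y ≠ 0 := Finsupp.mem_support_iff.mp hy
        exact mul_ne_zero hx0 hy0 h1.symm
      · intro t ht htx
        have := disj t x htx y
        rcases mul_eq_zero.mp this with h | h
        · rw [h, mul_zero]
        · exact absurd h (Finsupp.mem_support_iff.mp hy)
      · intro h; exact absurd hx h
    have hsupp_single : ∀ z : X, ∃ x, (c x).support = {z} := by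
      intro z
      obtain ⟨x1, hx1⟩ := husupp z
      refine ⟨x1, ?_⟩
      rcases Finset.subset_singleton_iff.mp (key z x1 hx1) with h | h
      · exact absurd h (Finsupp.support_nonempty_iff.mpr (hone x1)).ne_empty
      · exact h
    have hsig : ∀ x, ∃ z, (c x).support = {z} := by
      intro x
      obtain ⟨y, hy⟩ := Finsupp.support_nonempty_iff.mpr (hone x)
      obtain ⟨x1, hx1⟩ := hsupp_single y
      rcases eq_or_ne x1 x with rfl | hne
      · exact ⟨y, hx1⟩
      · exfalso
        have h1 : c x1 y ≠ 0 := by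
          rw [← Finsupp.mem_support_iff, hx1]; exact Finset.mem_singleton_self y
        have h2 : c x y ≠ 0 := Finsupp.mem_support_iff.mp hy
        rcases mul_eq_zero.mp (disj x1 x hne y) with h | h
        · exact h1 h
        · exact h2 h
    set σ0 : X → X := fun x => (hsig x).choose with hσ0def
    have hσ0 : ∀ x, (c x).support = {σ0 x} := fun x => (hsig x).choose_spec
    set ζ : X → ℂ := fun x => c x (σ0 x) with hζdef
    have hcx : ∀ x, c x = ζ x • Finsupp.single (σ0 x) 1 ∧ ζ x ≠ 0 := by
      intro x
      obtain ⟨h1, h2⟩ := Finsupp.support_eq_singleton.mp (hσ0 x)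
      constructor
      · rw [Finsupp.smul_single, smul_eq_mul, mul_one]
        exact h2
      · exact h1
    have hinj : Function.Injective σ0 := by
      intro x x' h
      by_contra hne
      rcases mul_eq_zero.mp (disj x x' hne (σ0 x)) with h0 | h0
      · exact (hcx x).2 h0
      · rw [h] at h0; exact (hcx x').2 h0
    have hsurj : Function.Surjective σ0 := by
      intro z
      obtain ⟨x, hx⟩ := hsupp_single z
      exact ⟨x, Finset.singleton_injective ((hσ0 x).symm.trans hx)⟩
    have hzeta : ∀ x, ζ x ^ (k+3) = 1 := by
      intro x
      have h0 := hg (fun _ => Finsupp.single x 1)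
      rw [hgm (fun _ => x), if_pos (fun _ _ => rfl)] at h0
      have h1 : (fun _ : Fin (k+3) => g (Finsupp.single x 1)) =
          fun _ => ζ x • Finsupp.single (σ0 x) 1 := funext fun _ => (hcx x).1
      rw [h1] at h0
      have h2 : (∏ _j : Fin (k+3), ζ x) • gm (fun _ => Finsupp.single (σ0 x) 1) = 1 := by
        rw [← gm.map_smul_univ]; exact h0
      have h3 := hgm (fun _ : Fin (k+3) => σ0 x)
      rw [if_pos (fun _ _ => rfl)] at h3
      rw [h3, smul_eq_mul, mul_one, Finset.prod_const, Finset.card_univ,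
        Fintype.card_fin] at h2
      exact h2
    have hPiff : ∀ (i : Fin r) (x : Fin (d i) → X), P i x ↔ P i (σ0 ∘ x) := by
      intro i x
      have h0 := hf i (fun j => Finsupp.single (x j.1) (1:ℂ))
      rw [hf' i (fun j => x j.1)] at h0
      have h1 : (fun j : Fin (d i) × Fin (k+3) => g (Finsupp.single (x j.1) (1:ℂ))) =
          fun j => ζ (x j.1) • Finsupp.single (σ0 (x j.1)) 1 :=
        funext fun j => (hcx (x j.1)).1
      rw [h1] at h0
      have h2 : (∏ j : Fin (d i) × Fin (k+3), ζ (x j.1)) •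
          f' i (fun j => Finsupp.single (σ0 (x j.1)) 1) =
          (if blownUp hp (P i) (fun j => x j.1) then 1 else 0) := by
        rw [← (f' i).map_smul_univ]; exact h0
      have hprodone : (∏ j : Fin (d i) × Fin (k+3), ζ (x j.1)) = 1 := by
        rw [Fintype.prod_prod_type]
        refine Finset.prod_eq_one fun a _ => ?_
        calc ∏ b : Fin (k+3), ζ (x (a, b).1)
            = ∏ _b : Fin (k+3), ζ (x a) := rfl
          _ = 1 := by
              rw [Finset.prod_const, Finset.card_univ, Fintype.card_fin]
              exact hzeta (x a)
      rw [hf' i (fun j => σ0 (x j.1)), hprodone, one_smul] at h2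
      have hiff := ite_one_zero_iff h2
      have hb1 : blownUp hp (P i) (fun j : Fin (d i) × Fin (k+3) => x j.1) ↔ P i x := by
        simp [blownUp]
      have hb2 : blownUp hp (P i) (fun j : Fin (d i) × Fin (k+3) => σ0 (x j.1)) ↔
          P i (σ0 ∘ x) := by
        simp [blownUp, Function.comp_def]
      exact (hb1.symm.trans (Iff.symm hiff)).trans hb2
    exact ⟨Equiv.ofBijective σ0 ⟨hinj, hsurj⟩, ζ, hzeta, hPiff, fun x => (hcx x).1⟩
  · rintro ⟨σ, ζ, hζ, hP, hgs⟩
    constructor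
    · intro i
      have hext : (f' i).compLinearMap
          (fun _ => (g : (X →₀ ℂ) →ₗ[ℂ] (X →₀ ℂ))) = f' i := by
        apply Module.Basis.ext_multilinear (fun _ => Finsupp.basisSingleOne (R := ℂ) (ι := X))
        intro x
        have hbs : ∀ t : X, (Finsupp.basisSingleOne (R := ℂ) (ι := X)) t =
            Finsupp.single t 1 := fun t => rfl
        simp only [MultilinearMap.compLinearMap_apply, LinearEquiv.coe_coe, hbs]
        calc f' i (fun j => g (Finsupp.single (x j) 1))
            = f' i (fun j => ζ (x j) • Finsupp.single (σ (x j)) 1) := by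
              congr 1; funext j; exact hgs (x j)
          _ = (∏ j, ζ (x j)) • f' i (fun j => Finsupp.single (σ (x j)) 1) :=
              (f' i).map_smul_univ _ _
          _ = (∏ j, ζ (x j)) * (if blownUp hp (P i) (fun j => σ (x j)) then 1 else 0) := by
              rw [hf' i (fun j => σ (x j)), smul_eq_mul]
          _ = (if blownUp hp (P i) x then 1 else 0) := by
              by_cases hb : blownUp hp (P i) x
              · have hb' : blownUp hp (P i) (fun j => σ (x j)) :=
                  ⟨fun a b cc => congrArg σ (hb.1 a b cc), (hP i _).mp hb.2⟩
                rw [if_pos hb, if_pos hb', mul_one]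
                rw [Fintype.prod_prod_type]
                refine Finset.prod_eq_one fun a _ => ?_
                calc ∏ b : Fin (k+3), ζ (x (a, b))
                    = ∏ _b : Fin (k+3), ζ (x (a, ⟨0, hp⟩)) :=
                      Finset.prod_congr rfl fun b _ => by rw [hb.1 a b ⟨0, hp⟩]
                  _ = 1 := by
                      rw [Finset.prod_const, Finset.card_univ, Fintype.card_fin]
                      exact hζ _
              · have hb' : ¬ blownUp hp (P i) (fun j => σ (x j)) := by
                  intro h
                  exact hb ⟨fun a b cc => σ.injective (h.1 a b cc), (hP i _).mpr h.2⟩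
                rw [if_neg hb, if_neg hb', mul_zero]
          _ = f' i (fun j => Finsupp.single (x j) 1) := (hf' i x).symm
      intro v
      have := DFunLike.congr_fun hext v
      simpa using this
    · have hext : gm.compLinearMap
          (fun _ => (g : (X →₀ ℂ) →ₗ[ℂ] (X →₀ ℂ))) = gm := by
        apply Module.Basis.ext_multilinear (fun _ => Finsupp.basisSingleOne (R := ℂ) (ι := X))
        intro x
        have hbs : ∀ t : X, (Finsupp.basisSingleOne (R := ℂ) (ι := X)) t =
            Finsupp.single t 1 := fun t => rfl
        simp only [MultilinearMap.compLinearMap_apply, LinearEquiv.coe_coe, hbs]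
        calc gm (fun j => g (Finsupp.single (x j) 1))
            = gm (fun j => ζ (x j) • Finsupp.single (σ (x j)) 1) := by
              congr 1; funext j; exact hgs (x j)
          _ = (∏ j, ζ (x j)) • gm (fun j => Finsupp.single (σ (x j)) 1) :=
              gm.map_smul_univ _ _
          _ = (∏ j, ζ (x j)) * (if ∀ j j', σ (x j) = σ (x j') then 1 else 0) := by
              rw [hgm (fun j => σ (x j)), smul_eq_mul]
          _ = (if ∀ j j', x j = x j' then 1 else 0) := by
              by_cases hb : ∀ j j', x j = x j'
              · have hb' : ∀ j j', σ (x j) = σ (x j') := fun j j' => congrArg σ (hb j j')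
                rw [if_pos hb, if_pos hb', mul_one]
                calc ∏ j : Fin (k+3), ζ (x j)
                    = ∏ _j : Fin (k+3), ζ (x 0) :=
                      Finset.prod_congr rfl fun j _ => by rw [hb j 0]
                  _ = 1 := by
                      rw [Finset.prod_const, Finset.card_univ, Fintype.card_fin]
                      exact hζ _
              · have hb' : ¬ ∀ j j', σ (x j) = σ (x j') := by
                  intro h
                  exact hb fun j j' => σ.injective (h j j')
                rw [if_neg hb, if_neg hb', mul_zero]
          _ = gm (fun j => Finsupp.single (x j) 1) := (hgm x).symm
      intro v
      have := DFunLike.congr_fun hext v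
      simpa using this
end

section
/- A scaled permutation $g \in \mu_m \wr \mathfrak{S}_X$, with $g e_x = \zeta_x e_{\sigma(x)}$ ($\zeta_x^m = 1$), preserves the $m d$-linear form $f'$ encoding a blown-up $d$-ary relation $P'$ (as defined via blocks of size $m$) if and only if the underlying permutation $\sigma$ is an automorphism of the original relation $P$. In particular, the scalars $\zeta_x$ are unconstrained. -/
open scoped Classical

/-- a scaled permutation `g e_x = ζ_x e_{σ(x)}` with `ζ_x^m = 1` preserves the
multilinear form `f'` encoding the blown-up relation `P'` iff the underlying permutation `σ`
is an automorphism of the original relation `P`; the scalars are unconstrained. -/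
theorem stmt8 {X : Type*} (d m : ℕ) (hm : 2 ≤ m)
    (P : (Fin d → X) → Prop)
    (f' : MultilinearMap ℂ (fun _ : Fin d × Fin m => (X →₀ ℂ)) ℂ)
    (hf' : ∀ x : Fin d × Fin m → X,
      f' (fun j => Finsupp.single (x j) 1) = if blownUp (by omega) P x then 1 else 0)
    (g : (X →₀ ℂ) →ₗ[ℂ] (X →₀ ℂ)) (σ : Equiv.Perm X) (ζ : X → ℂ)
    (hζ : ∀ x, ζ x ^ m = 1)
    (hg : ∀ x, g (Finsupp.single x 1) = ζ x • Finsupp.single (σ x) 1) :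
    (∀ v : Fin d × Fin m → (X →₀ ℂ), f' (fun j => g (v j)) = f' v) ↔
    (∀ x : Fin d → X, P x ↔ P (σ ∘ x)) := by
  have hm0 : (0:ℕ) < m := by omega
  -- key basis computation
  have key : ∀ x : Fin d × Fin m → X,
      f' (fun j => g (Finsupp.single (x j) 1)) =
        (∏ j : Fin d × Fin m, ζ (x j)) *
          (if blownUp hm0 P (fun j => σ (x j)) then 1 else 0) := by
    intro x
    have : (fun j : Fin d × Fin m => g (Finsupp.single (x j) 1)) =
        fun j => ζ (x j) • Finsupp.single (σ (x j)) 1 := by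
      funext j; exact hg (x j)
    rw [this, f'.map_smul_univ, hf' (fun j => σ (x j))]
    simp
  have prod_one : ∀ x : Fin d × Fin m → X,
      (∀ (a : Fin d) (b c : Fin m), x (a, b) = x (a, c)) →
      (∏ j : Fin d × Fin m, ζ (x j)) = 1 := by
    intro x hx
    rw [Fintype.prod_prod_type]
    have : ∀ a : Fin d, (∏ b : Fin m, ζ (x (a, b))) = 1 := by
      intro a
      have : (∏ b : Fin m, ζ (x (a, b))) = ∏ _b : Fin m, ζ (x (a, ⟨0, hm0⟩)) :=
        Finset.prod_congr rfl (fun b _ => by rw [hx a b ⟨0, hm0⟩])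
      rw [this, Finset.prod_const, Finset.card_univ, Fintype.card_fin, hζ]
    simp [this]
  constructor
  · intro hpres x
    have h1 := hpres (fun j => Finsupp.single (x j.1) 1)
    rw [key, hf'] at h1
    have hconst : ∀ (a : Fin d) (b c : Fin m),
        (fun j : Fin d × Fin m => x j.1) (a, b) = (fun j : Fin d × Fin m => x j.1) (a, c) :=
      fun a b c => rfl
    rw [prod_one _ hconst, one_mul] at h1
    have hb1 : blownUp hm0 P (fun j : Fin d × Fin m => σ (x j.1)) ↔ P (σ ∘ x) := by
      constructor
      · intro h; exact h.2
      · intro h; exact ⟨fun a b c => rfl, h⟩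
    have hb2 : blownUp hm0 P (fun j : Fin d × Fin m => x j.1) ↔ P x := by
      constructor
      · intro h; exact h.2
      · intro h; exact ⟨fun a b c => rfl, h⟩
    by_cases hp : P x
    · rw [if_pos (hb2.mpr hp)] at h1
      constructor
      · intro _
        by_contra hq
        rw [if_neg (fun h => hq (hb1.mp h))] at h1
        exact one_ne_zero h1.symm
      · intro _; exact hp
    · rw [if_neg (fun h => hp (hb2.mp h))] at h1
      constructor
      · intro h; exact absurd h hp
      · intro hq
        rw [if_pos (hb1.mpr hq)] at h1
        exact absurd h1 one_ne_zero
  · intro haut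
    have : f'.compLinearMap (fun _ => g) = f' := by
      apply Module.Basis.ext_multilinear (fun _ => Finsupp.basisSingleOne (R := ℂ) (ι := X))
      intro x
      have hb : ∀ j, (Finsupp.basisSingleOne (R := ℂ) (ι := X)) (x j)
          = Finsupp.single (x j) 1 := fun j => rfl
      simp only [MultilinearMap.compLinearMap_apply, hb]
      rw [key, hf']
      have hblow : blownUp hm0 P (fun j => σ (x j)) ↔ blownUp hm0 P x := by
        constructor
        · rintro ⟨hc, hp⟩
          refine ⟨fun a b c => σ.injective (hc a b c), ?_⟩
          have := haut (fun a => x (a, ⟨0, hm0⟩))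
          exact this.mpr hp
        · rintro ⟨hc, hp⟩
          refine ⟨fun a b c => congrArg σ (hc a b c), ?_⟩
          exact (haut (fun a => x (a, ⟨0, hm0⟩))).mp hp
      by_cases hb' : blownUp hm0 P x
      · rw [if_pos (hblow.mpr hb'), if_pos hb', prod_one x hb'.1, one_mul]
      · rw [if_neg (fun h => hb' (hblow.mp h)), if_neg hb', mul_zero]
    intro v
    have h := congrFun (congrArg DFunLike.coe this) v
    simpa using h
end

section
/- Let $\Gamma = \mathbf{Z}$ act on itself by translation and let $G = \mu_3 \wr \mathbf{Z}$ act on $V = \mathbf{C}^{(\mathbf{Z})}$ by $e_i \mapsto \zeta_i e_{i+c}$. Then $V$ is an irreducible representation of $G$, but $V \otimes V$ has infinite length as a $G$-representation. -/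
/-!
A nonzero invariant subspace of `V` contains, with `v`, each coordinate projection
`v i • e_i`: averaging the diagonal `μ₃`-action against the character that is nontrivial
exactly at `i` isolates that coordinate. Translations then move `e_i` to every `e_m`.
In `V ⊗ V = ℂ^{(ℤ × ℤ)}` the diagonal action preserves any support condition and the
translations preserve `j - i`, so the subspaces supported on `{(i, j) | j - i ≤ d}`
form an infinite strictly increasing chain of subrepresentations.
-/

/-- Translation by `c` on `V = ℂ^{(ℤ)}`: `e_i ↦ e_{i+c}`. -/
noncomputable def shiftV (c : ℤ) : (ℤ →₀ ℂ) ≃ₗ[ℂ] (ℤ →₀ ℂ) :=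
  Finsupp.domLCongr (Equiv.addRight c)

/-- Diagonal scaling on `V`: `e_i ↦ ζ_i e_i`. -/
noncomputable def diagV (ζ : ℤ → ℂ) : (ℤ →₀ ℂ) →ₗ[ℂ] (ℤ →₀ ℂ) :=
  Finsupp.lsum ℂ (fun i : ℤ => ζ i • Finsupp.lsingle i)

/-- Translation by `c` on `V ⊗ V`, modelled as `ℂ^{(ℤ × ℤ)}`: `e_{(i,j)} ↦ e_{(i+c,j+c)}`. -/
noncomputable def shiftVV (c : ℤ) : (ℤ × ℤ →₀ ℂ) ≃ₗ[ℂ] (ℤ × ℤ →₀ ℂ) :=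
  Finsupp.domLCongr ((Equiv.addRight c).prodCongr (Equiv.addRight c))

/-- Diagonal scaling on `V ⊗ V`: `e_{(i,j)} ↦ ζ_i ζ_j e_{(i,j)}`. -/
noncomputable def diagVV (ζ : ℤ → ℂ) : (ℤ × ℤ →₀ ℂ) →ₗ[ℂ] (ℤ × ℤ →₀ ℂ) :=
  Finsupp.lsum ℂ (fun p : ℤ × ℤ => (ζ p.1 * ζ p.2) • Finsupp.lsingle p)


lemma diagV_apply (ζ : ℤ → ℂ) (v : ℤ →₀ ℂ) (k : ℤ) : diagV ζ v k = ζ k * v k := by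
  simp +contextual [diagV, Finsupp.sum_apply, Finsupp.single_apply]

lemma diagVV_apply (ζ : ℤ → ℂ) (v : ℤ × ℤ →₀ ℂ) (k : ℤ × ℤ) :
    diagVV ζ v k = ζ k.1 * ζ k.2 * v k := by
  simp +contextual [diagVV, Finsupp.sum_apply, Finsupp.single_apply]

lemma shiftV_single (c i : ℤ) (a : ℂ) :
    shiftV c (Finsupp.single i a) = Finsupp.single (i + c) a := by
  simp [shiftV]

lemma shiftVV_apply (c : ℤ) (v : ℤ × ℤ →₀ ℂ) (q : ℤ × ℤ) :
    shiftVV c v q = v (q.1 - c, q.2 - c) := by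
  simp only [shiftVV, Finsupp.domLCongr_apply, Finsupp.domCongr_apply,
    Finsupp.equivMapDomain_apply, Equiv.prodCongr_symm, Equiv.addRight_symm,
    Equiv.prodCongr_apply, Equiv.coe_addRight, sub_eq_add_neg]
  rfl

/-- With `ζ = 1` off `i` and `ζ i = ω`, the average `(v + ω² ζ•v + ω ζ²•v) / 3` keeps the
`i`-th coordinate of `v` and kills all others (orthogonality of the characters of `μ₃`). -/
lemma single_apply_mem_of_diagV_stable {W : Submodule ℂ (ℤ →₀ ℂ)}
    (hdiag : ∀ ζ : ℤ → ℂ, (∀ i, ζ i ^ 3 = 1) → ∀ v ∈ W, diagV ζ v ∈ W)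
    {v : ℤ →₀ ℂ} (hv : v ∈ W) (i : ℤ) : Finsupp.single i (v i) ∈ W := by
  obtain ⟨ω, hω⟩ : ∃ ω : ℂ, IsPrimitiveRoot ω 3 :=
    ⟨_, Complex.isPrimitiveRoot_exp 3 (by norm_num)⟩
  have hω3 : ω ^ 3 = 1 := hω.pow_eq_one
  have hωsum : 1 + ω + ω ^ 2 = 0 := by
    simpa [Finset.sum_range_succ] using hω.geom_sum_eq_zero (by norm_num)
  set ζ : ℤ → ℂ := Function.update 1 i ω
  have hζ : ∀ k, ζ k ^ 3 = 1 := fun k => by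
    rcases eq_or_ne k i with rfl | hk <;> simp [ζ, *]
  have hζ2 : ∀ k, (ζ ^ 2) k ^ 3 = 1 := fun k => by
    rw [Pi.pow_apply, ← pow_mul, mul_comm, pow_mul, hζ, one_pow]
  have hproj : Finsupp.single i (v i) =
      (3 : ℂ)⁻¹ • (v + ω ^ 2 • diagV ζ v + ω • diagV (ζ ^ 2) v) := by
    ext k
    rcases eq_or_ne k i with rfl | hk
    · simp only [Finsupp.single_eq_same, Finsupp.smul_apply, Finsupp.add_apply, smul_eq_mul,
        diagV_apply, Pi.pow_apply, ζ, Function.update_self]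
      linear_combination (-2 * v k / 3) * hω3
    · simp only [Finsupp.single_eq_of_ne hk, Finsupp.smul_apply, Finsupp.add_apply, smul_eq_mul,
        diagV_apply, Pi.pow_apply, ζ, Function.update_of_ne hk, Pi.one_apply, one_pow]
      linear_combination (-v k / 3) * hωsum
  rw [hproj]
  exact W.smul_mem _ <| W.add_mem (W.add_mem hv (W.smul_mem _ (hdiag ζ hζ v hv)))
    (W.smul_mem _ (hdiag _ hζ2 v hv))

lemma eq_top_of_shiftV_stable_of_single_mem {W : Submodule ℂ (ℤ →₀ ℂ)}
    (hshift : ∀ c : ℤ, ∀ v ∈ W, shiftV c v ∈ W) {i : ℤ} {a : ℂ} (ha : a ≠ 0)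
    (hi : Finsupp.single i a ∈ W) : W = ⊤ := by
  have hsingle : ∀ m b, Finsupp.single m b ∈ W := fun m b => by
    have hm := hshift (m - i) _ (W.smul_mem (b / a) hi)
    rwa [Finsupp.smul_single, smul_eq_mul, div_mul_cancel₀ b ha, shiftV_single,
      add_sub_cancel] at hm
  rw [Submodule.eq_top_iff']
  intro u
  rw [← Finsupp.sum_single u]
  exact W.finsuppSum_mem ℂ u _ fun m _ => hsingle m _

theorem eq_bot_or_eq_top_of_shiftV_diagV_stable (W : Submodule ℂ (ℤ →₀ ℂ))
    (hshift : ∀ c : ℤ, ∀ v ∈ W, shiftV c v ∈ W)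
    (hdiag : ∀ ζ : ℤ → ℂ, (∀ i, ζ i ^ 3 = 1) → ∀ v ∈ W, diagV ζ v ∈ W) :
    W = ⊥ ∨ W = ⊤ := by
  refine or_iff_not_imp_left.mpr fun hW => ?_
  obtain ⟨v, hvW, hv⟩ := Submodule.exists_mem_ne_zero_of_ne_bot hW
  obtain ⟨i, hi⟩ := Finsupp.ne_iff.mp hv
  exact eq_top_of_shiftV_stable_of_single_mem hshift hi
    (single_apply_mem_of_diagV_stable hdiag hvW i)

theorem Finsupp.supported_le_supported_iff {α M R : Type*} [Semiring R] [AddCommMonoid M]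
    [Module R M] [Nontrivial M] {s t : Set α} :
    supported M R s ≤ supported M R t ↔ s ⊆ t := by
  refine ⟨fun h a ha => ?_, supported_mono⟩
  obtain ⟨y, hy⟩ := exists_ne (0 : M)
  simpa [mem_supported, support_single _ hy] using h (single_mem_supported R y ha)

theorem Finsupp.supported_strictMono {α M R : Type*} [Semiring R] [AddCommMonoid M]
    [Module R M] [Nontrivial M] : StrictMono (supported M R : Set α → Submodule R (α →₀ M)) :=
  fun _ _ h => by simpa only [lt_iff_le_not_ge, supported_le_supported_iff] using h

def band (d : ℤ) : Set (ℤ × ℤ) := {p | p.2 - p.1 ≤ d}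

lemma band_strictMono : StrictMono band := by
  intro d d' h
  have hsub : band d ⊆ band d' := fun p (hp : p.2 - p.1 ≤ d) => hp.trans h.le
  refine (Set.ssubset_iff_of_subset hsub).mpr ⟨(0, d'), ?_, ?_⟩
  · simp [band]
  · simpa [band] using h

lemma shiftVV_mem_supported_band {d : ℤ} (c : ℤ) {v : ℤ × ℤ →₀ ℂ}
    (hv : v ∈ Finsupp.supported ℂ ℂ (band d)) :
    shiftVV c v ∈ Finsupp.supported ℂ ℂ (band d) := by
  rw [Finsupp.mem_supported'] at hv ⊢
  intro q hq
  rw [shiftVV_apply]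
  refine hv _ ?_
  simp only [band, Set.mem_ofPred_eq, not_le] at hq ⊢
  linarith

lemma diagVV_mem_supported (ζ : ℤ → ℂ) {s : Set (ℤ × ℤ)} {v : ℤ × ℤ →₀ ℂ}
    (hv : v ∈ Finsupp.supported ℂ ℂ s) : diagVV ζ v ∈ Finsupp.supported ℂ ℂ s := by
  rw [Finsupp.mem_supported'] at hv ⊢
  intro q hq
  rw [diagVV_apply, hv q hq, mul_zero]

/-- for `G = μ₃ ≀ ℤ` acting on `V = ℂ^{(ℤ)}` by `e_i ↦ ζ_i e_{i+c}`
(`ζ_i³ = 1`), `V` is an irreducible representation of `G`, but `V ⊗ V` has infinite length: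
there are arbitrarily long strictly increasing chains of `G`-subrepresentations. -/
theorem stmt14 :
    (∀ W : Submodule ℂ (ℤ →₀ ℂ),
      (∀ c : ℤ, ∀ v ∈ W, shiftV c v ∈ W) →
      (∀ ζ : ℤ → ℂ, (∀ i, ζ i ^ 3 = 1) → ∀ v ∈ W, diagV ζ v ∈ W) →
      W = ⊥ ∨ W = ⊤) ∧
    (∀ n : ℕ, ∃ W : Fin (n + 1) → Submodule ℂ (ℤ × ℤ →₀ ℂ),
      StrictMono W ∧ ∀ j,
        (∀ c : ℤ, ∀ v ∈ W j, shiftVV c v ∈ W j) ∧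
        (∀ ζ : ℤ → ℂ, (∀ i, ζ i ^ 3 = 1) → ∀ v ∈ W j, diagVV ζ v ∈ W j)) := by
  refine ⟨eq_bot_or_eq_top_of_shiftV_diagV_stable, fun n =>
    ⟨fun j => Finsupp.supported ℂ ℂ (band (j : ℕ)), ?_, fun j => ?_⟩⟩
  · exact Finsupp.supported_strictMono.comp
      (band_strictMono.comp (Nat.strictMono_cast.comp Fin.val_strictMono))
  · exact ⟨fun c _ => shiftVV_mem_supported_band c, fun ζ _ _ => diagVV_mem_supported ζ⟩
end
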